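/- For f ∈ C_c(G × G, A), x ∈ C_c(G, A) and g ∈ C_c(H, A), define (x·g)(r) = ∫_H x(rt) α_{rt}(g(t⁻¹)) Δ_H(t)^{-1/2} dt and ψ(f,x)(h,s) = ∫_G f(t,s) α_t(x(t⁻¹sh)) Δ_H(h)^{-1/2} Δ_G(t)^{1/2} dt. Then for every h ∈ H and s ∈ G: ψ(f, x·g)(h,s) = ∫_H ψ(f,x)(k,s) α_{sk}(g(k⁻¹h)) dk. -/

import Mathlib

open MeasureTheory

/-- Any function satisfying the modular-function identity for a Haar measure is
continuous and multiplicative. -/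
lemma modular_aux {X : Type*} [Group X] [TopologicalSpace X] [IsTopologicalGroup X]
    [LocallyCompactSpace X] [T2Space X] [MeasurableSpace X] [BorelSpace X]
    (m : Measure X) [m.IsHaarMeasure] (Δ : X → ℝ) (hpos : ∀ t, 0 < Δ t)
    (hid : ∀ f : X → ℝ, Continuous f → HasCompactSupport f →
      ∀ t, ∫ s, f (s * t) ∂m = (Δ t)⁻¹ * ∫ s, f s ∂m) :
    Continuous Δ ∧ ∀ a b, Δ (a * b) = Δ a * Δ b := by
  obtain ⟨f₀, f₀_supp, f₀_nonneg, f₀_one⟩ := exists_continuous_nonneg_pos (1 : X)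
  have f₀_cont : Continuous f₀ := f₀.continuous
  set I : ℝ := ∫ s, f₀ s ∂m with hI
  have I_pos : 0 < I :=
    integral_pos_of_integrable_nonneg_nonzero f₀_cont
      (f₀_cont.integrable_of_hasCompactSupport f₀_supp) f₀_nonneg f₀_one
  have key : ∀ t, ∫ s, f₀ (s * t) ∂m = (Δ t)⁻¹ * I := fun t => hid f₀ f₀_cont f₀_supp t
  constructor
  · have hF : Continuous fun t => ∫ s, f₀ (s * t) ∂m := by
      rw [continuous_iff_continuousAt]
      intro t₀
      obtain ⟨V, V_comp, hV⟩ := exists_compact_mem_nhds t₀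
      have : ContinuousOn (fun t => ∫ s, f₀ (s * t) ∂m) V := by
        apply continuousOn_integral_of_compact_support (f₀_supp.mul V_comp.inv)
        · exact (f₀_cont.comp (continuous_snd.mul continuous_fst)).continuousOn
        · intro p u hp hu
          by_contra hne
          apply hu
          have h1 : u * p ∈ tsupport f₀ := subset_tsupport _ hne
          have h2 : p⁻¹ ∈ (V : Set X)⁻¹ := Set.inv_mem_inv.2 hp
          have := Set.mul_mem_mul h1 h2
          simpa using this
      exact this.continuousAt hV
    have hΔeq : Δ = fun t => I / ∫ s, f₀ (s * t) ∂m := by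
      funext t
      rw [key t]
      have h1 : Δ t ≠ 0 := (hpos t).ne'
      have h2 : I ≠ 0 := I_pos.ne'
      field_simp
    rw [hΔeq]
    apply continuous_const.div hF
    intro t
    rw [key t]
    exact (mul_pos (inv_pos.2 (hpos t)) I_pos).ne'
  · intro a b
    have h2 : ∫ u, f₀ (u * (a * b)) ∂m = (Δ a)⁻¹ * ((Δ b)⁻¹ * I) := by
      have hb : Continuous fun u => f₀ (u * b) := f₀_cont.comp (continuous_mul_right b)
      have hbs : HasCompactSupport fun u => f₀ (u * b) :=
        f₀_supp.comp_homeomorph (Homeomorph.mulRight b)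
      have h3 := hid (fun u => f₀ (u * b)) hb hbs a
      rw [key b] at h3
      rw [← h3]
      congr 1
      funext u
      rw [mul_assoc]
    rw [key (a * b)] at h2
    have h4 : (Δ (a * b))⁻¹ = ((Δ a) * (Δ b))⁻¹ := by
      rw [mul_inv]
      rw [← mul_assoc] at h2
      exact mul_right_cancel₀ I_pos.ne' h2
    exact inv_injective h4

/-- `ψ(f, x·g)(h,s) = ∫_H ψ(f,x)(k,s) α_{sk}(g(k⁻¹h)) dk`:
the map `(f, x) ↦ ψ(f,x)` intertwines the right module actions. -/
theorem stmt_8 {G : Type*} [Group G] [TopologicalSpace G] [IsTopologicalGroup G]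
    [LocallyCompactSpace G] [T2Space G] [MeasurableSpace G] [BorelSpace G]
    (μ : Measure G) [μ.IsHaarMeasure]
    (H : Subgroup G) (hH : IsClosed (H : Set G))
    (ν : Measure ↥H) [ν.IsHaarMeasure]
    (ΔG : G → ℝ) (hΔG_pos : ∀ t, 0 < ΔG t)
    (hΔG : ∀ f : G → ℝ, Continuous f → HasCompactSupport f →
      ∀ t : G, ∫ s, f (s * t) ∂μ = (ΔG t)⁻¹ * ∫ s, f s ∂μ)
    (ΔH : ↥H → ℝ) (hΔH_pos : ∀ h, 0 < ΔH h)
    (hΔH : ∀ f : ↥H → ℝ, Continuous f → HasCompactSupport f →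
      ∀ h : ↥H, ∫ k, f (k * h) ∂ν = (ΔH h)⁻¹ * ∫ k, f k ∂ν)
    {A : Type*} [NonUnitalCStarAlgebra A]
    (α : G → A ≃⋆ₐ[ℂ] A) (hα_one : ∀ a : A, α 1 a = a)
    (hα_mul : ∀ s t : G, ∀ a : A, α (s * t) a = α s (α t a))
    (hα_cont : Continuous fun p : G × A => α p.1 p.2)
    (f : G × G → A) (hf_cont : Continuous f) (hf_supp : HasCompactSupport f)
    (x : G → A) (hx_cont : Continuous x) (hx_supp : HasCompactSupport x)
    (g : ↥H → A) (hg_cont : Continuous g) (hg_supp : HasCompactSupport g)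
    (xg : G → A)
    (hxg : ∀ r : G, xg r =
      ∫ t, (Real.sqrt (ΔH t))⁻¹ • (x (r * (t : G)) * α (r * (t : G)) (g t⁻¹)) ∂ν)
    (ψfx : ↥H × G → A)
    (hψfx : ∀ (h : ↥H) (s : G), ψfx (h, s) =
      ∫ t, ((Real.sqrt (ΔH h))⁻¹ * Real.sqrt (ΔG t)) •
        (f (t, s) * α t (x (t⁻¹ * s * (h : G)))) ∂μ) :
    ∀ (h : ↥H) (s : G),
      (∫ t, ((Real.sqrt (ΔH h))⁻¹ * Real.sqrt (ΔG t)) •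
          (f (t, s) * α t (xg (t⁻¹ * s * (h : G)))) ∂μ) =
        ∫ k, ψfx (k, s) * α (s * (k : G)) (g (k⁻¹ * h)) ∂ν := by
  intro h s
  haveI : LocallyCompactSpace ↥H := hH.locallyCompactSpace
  haveI : BorelSpace ↥H := Subtype.borelSpace (H : Set G)
  obtain ⟨hΔGc, hΔGm⟩ := modular_aux μ ΔG hΔG_pos hΔG
  obtain ⟨hΔHc, hΔHm⟩ := modular_aux ν ΔH hΔH_pos hΔH
  have hΔH_one : ΔH 1 = 1 := by
    have h1 := hΔHm 1 1
    rw [mul_one] at h1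
    nlinarith [hΔH_pos 1]
  have hΔH_inv : ∀ z : ↥H, ΔH z⁻¹ = (ΔH z)⁻¹ := by
    intro z
    have h1 : ΔH z * ΔH z⁻¹ = 1 := by
      rw [← hΔHm]
      simp [hΔH_one]
    exact eq_inv_of_mul_eq_one_right h1
  have sΔH_pos : ∀ k : ↥H, 0 < Real.sqrt (ΔH k) := fun k => Real.sqrt_pos.2 (hΔH_pos k)
  have α_cont : ∀ t : G, Continuous (α t) := fun t =>
    hα_cont.comp (continuous_const.prodMk continuous_id)
  let L : G → A →L[ℂ] A := fun t =>
    ⟨{ toFun := α t,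
       map_add' := fun a b => map_add (α t) a b,
       map_smul' := fun c a => map_smul (α t) c a }, α_cont t⟩
  have α_rsmul : ∀ (t : G) (r : ℝ) (a : A), α t (r • a) = r • α t a := by
    intro t r a
    rw [← Complex.coe_smul, _root_.map_smul, Complex.coe_smul]
  -- integrability of the inner integrand defining `xg`
  have int1 : ∀ r : G, Integrable
      (fun τ : ↥H => (Real.sqrt (ΔH τ))⁻¹ •
        (x (r * (τ : G)) * α (r * (τ : G)) (g τ⁻¹))) ν := by
    intro r
    apply Continuous.integrable_of_hasCompactSupport
    · apply Continuous.smul (M := ℝ)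
      · exact (Real.continuous_sqrt.comp hΔHc).inv₀ (fun τ => (sΔH_pos τ).ne')
      · exact (hx_cont.comp (continuous_const.mul continuous_subtype_val)).mul
          (hα_cont.comp ((continuous_const.mul continuous_subtype_val).prodMk
            (hg_cont.comp continuous_inv)))
    · apply HasCompactSupport.intro (IsCompact.inv (hg_supp : IsCompact (tsupport g)))
      intro τ hτ
      have hz : g τ⁻¹ = 0 := by
        by_contra hne
        exact hτ (Set.mem_inv.2 (subset_tsupport g hne))
      simp [hz]
  -- integrability of the integrand defining `ψfx (k, s)`
  have int2 : ∀ k : ↥H, Integrable (fun t : G =>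
      ((Real.sqrt (ΔH k))⁻¹ * Real.sqrt (ΔG t)) •
        (f (t, s) * α t (x (t⁻¹ * s * (k : G))))) μ := by
    intro k
    apply Continuous.integrable_of_hasCompactSupport
    · apply Continuous.smul (M := ℝ)
      · exact continuous_const.mul (Real.continuous_sqrt.comp hΔGc)
      · exact (hf_cont.comp (continuous_id.prodMk continuous_const)).mul
          (hα_cont.comp (continuous_id.prodMk (hx_cont.comp
            ((continuous_inv.mul continuous_const).mul continuous_const))))
    · apply HasCompactSupport.intro
        ((hf_supp : IsCompact (tsupport f)).image continuous_fst)
      intro t ht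
      have hz : f (t, s) = 0 := by
        by_contra hne
        exact ht ⟨(t, s), subset_tsupport f hne, rfl⟩
      simp [hz]
  -- the double integrand
  set F : G → ↥H → A := fun t τ =>
    (((Real.sqrt (ΔH h))⁻¹ * Real.sqrt (ΔG t)) * (Real.sqrt (ΔH τ))⁻¹) •
      (f (t, s) * (α t (x (t⁻¹ * s * (h : G) * (τ : G))) *
        α (s * (h : G) * (τ : G)) (g τ⁻¹))) with hF
  have Fc : Continuous (Function.uncurry F) := by
    apply Continuous.smul (M := ℝ)
    · exact (continuous_const.mul (Real.continuous_sqrt.comp (hΔGc.comp continuous_fst))).mul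
        ((Real.continuous_sqrt.comp (hΔHc.comp continuous_snd)).inv₀
          (fun p => (sΔH_pos p.2).ne'))
    · apply Continuous.mul
      · exact hf_cont.comp (continuous_fst.prodMk continuous_const)
      · apply Continuous.mul
        · exact hα_cont.comp (continuous_fst.prodMk (hx_cont.comp
            (((continuous_fst.inv.mul continuous_const).mul continuous_const).mul
              (continuous_subtype_val.comp continuous_snd))))
        · exact hα_cont.comp ((continuous_const.mul
            (continuous_subtype_val.comp continuous_snd)).prodMk
            (hg_cont.comp (continuous_inv.comp continuous_snd)))
  have Fs : HasCompactSupport (Function.uncurry F) := by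
    apply HasCompactSupport.intro
      (((hf_supp : IsCompact (tsupport f)).image continuous_fst).prod
        (IsCompact.inv (hg_supp : IsCompact (tsupport g))))
    rintro ⟨t, τ⟩ hp
    simp only [Set.mem_prod, not_and_or] at hp
    rcases hp with hp | hp
    · have hz : f (t, s) = 0 := by
        by_contra hne
        exact hp ⟨(t, s), subset_tsupport f hne, rfl⟩
      simp [Function.uncurry, hF, hz]
    · have hz : g τ⁻¹ = 0 := by
        by_contra hne
        exact hp (Set.mem_inv.2 (subset_tsupport g hne))
      simp [Function.uncurry, hF, hz]
  -- Step 1: rewrite the inner expression as an integral over H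
  have step1 : ∀ t : G,
      ((Real.sqrt (ΔH h))⁻¹ * Real.sqrt (ΔG t)) •
          (f (t, s) * α t (xg (t⁻¹ * s * (h : G)))) = ∫ τ, F t τ ∂ν := by
    intro t
    have A1 : α t (∫ τ, (Real.sqrt (ΔH τ))⁻¹ •
          (x (t⁻¹ * s * (h : G) * (τ : G)) * α (t⁻¹ * s * (h : G) * (τ : G)) (g τ⁻¹)) ∂ν)
        = ∫ τ, α t ((Real.sqrt (ΔH τ))⁻¹ •
          (x (t⁻¹ * s * (h : G) * (τ : G)) * α (t⁻¹ * s * (h : G) * (τ : G)) (g τ⁻¹))) ∂ν :=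
      (ContinuousLinearMap.integral_comp_comm (L t) (int1 (t⁻¹ * s * (h : G)))).symm
    have intL : Integrable (fun τ : ↥H => α t ((Real.sqrt (ΔH τ))⁻¹ •
          (x (t⁻¹ * s * (h : G) * (τ : G)) * α (t⁻¹ * s * (h : G) * (τ : G)) (g τ⁻¹)))) ν :=
      (L t).integrable_comp (int1 (t⁻¹ * s * (h : G)))
    have A2 : f (t, s) * (∫ τ, α t ((Real.sqrt (ΔH τ))⁻¹ •
          (x (t⁻¹ * s * (h : G) * (τ : G)) * α (t⁻¹ * s * (h : G) * (τ : G)) (g τ⁻¹))) ∂ν)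
        = ∫ τ, f (t, s) * α t ((Real.sqrt (ΔH τ))⁻¹ •
          (x (t⁻¹ * s * (h : G) * (τ : G)) * α (t⁻¹ * s * (h : G) * (τ : G)) (g τ⁻¹))) ∂ν := by
      have h5 := ContinuousLinearMap.integral_comp_comm
        (ContinuousLinearMap.mul ℂ A (f (t, s))) intL
      simp only [ContinuousLinearMap.mul_apply'] at h5
      exact h5.symm
    rw [hxg, A1, A2, ← integral_smul]
    congr 1
    funext τ
    rw [α_rsmul, mul_smul_comm, smul_smul]
    rw [hF]
    simp only []
    congr 1
    rw [map_mul]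
    congr 1
    rw [← hα_mul]
    have egrp : t * (t⁻¹ * s * (h : G) * (τ : G)) = s * (h : G) * (τ : G) := by group
    rw [egrp]
  -- Main computation
  calc
    (∫ t, ((Real.sqrt (ΔH h))⁻¹ * Real.sqrt (ΔG t)) •
        (f (t, s) * α t (xg (t⁻¹ * s * (h : G)))) ∂μ)
      = ∫ t, ∫ τ, F t τ ∂ν ∂μ := by
        congr 1; funext t; exact step1 t
    _ = ∫ τ, ∫ t, F t τ ∂μ ∂ν := integral_integral_swap_of_hasCompactSupport Fc Fs
    _ = ∫ k, ∫ t, F t (h⁻¹ * k) ∂μ ∂ν :=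
        (integral_mul_left_eq_self (fun τ => ∫ t, F t τ ∂μ) h⁻¹).symm
    _ = ∫ k, ψfx (k, s) * α (s * (k : G)) (g (k⁻¹ * h)) ∂ν := by
        congr 1; funext k
        have hg1 : (h⁻¹ * k)⁻¹ = k⁻¹ * h := by group
        have hg2 : ((h⁻¹ * k : ↥H) : G) = ((h : G))⁻¹ * (k : G) := by
          simp
        have e1 : ∀ t : G, F t (h⁻¹ * k) =
            (((Real.sqrt (ΔH k))⁻¹ * Real.sqrt (ΔG t)) •
              (f (t, s) * α t (x (t⁻¹ * s * (k : G))))) *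
              α (s * (k : G)) (g (k⁻¹ * h)) := by
          intro t
          rw [hF]
          simp only []
          have hsc2 : ((Real.sqrt (ΔH h))⁻¹ * Real.sqrt (ΔG t)) * (Real.sqrt (ΔH (h⁻¹ * k)))⁻¹
              = (Real.sqrt (ΔH k))⁻¹ * Real.sqrt (ΔG t) := by
            rw [hΔHm, hΔH_inv, Real.sqrt_mul (inv_pos.2 (hΔH_pos h)).le, Real.sqrt_inv]
            have h1 : Real.sqrt (ΔH h) ≠ 0 := (sΔH_pos h).ne'
            have h2 : Real.sqrt (ΔH k) ≠ 0 := (sΔH_pos k).ne'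
            field_simp
          have e2 : t⁻¹ * s * (h : G) * (((h : G))⁻¹ * (k : G)) = t⁻¹ * s * (k : G) := by group
          have e3 : s * (h : G) * (((h : G))⁻¹ * (k : G)) = s * (k : G) := by group
          rw [hg1, hg2, e2, e3, hsc2, smul_mul_assoc, mul_assoc, mul_assoc]
        calc
          ∫ t, F t (h⁻¹ * k) ∂μ
            = ∫ t, (((Real.sqrt (ΔH k))⁻¹ * Real.sqrt (ΔG t)) •
                (f (t, s) * α t (x (t⁻¹ * s * (k : G))))) *
                  α (s * (k : G)) (g (k⁻¹ * h)) ∂μ := by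
              congr 1; funext t; exact e1 t
          _ = (∫ t, ((Real.sqrt (ΔH k))⁻¹ * Real.sqrt (ΔG t)) •
                (f (t, s) * α t (x (t⁻¹ * s * (k : G)))) ∂μ) *
                  α (s * (k : G)) (g (k⁻¹ * h)) := by
              have h6 := ContinuousLinearMap.integral_comp_comm
                ((ContinuousLinearMap.mul ℂ A).flip (α (s * (k : G)) (g (k⁻¹ * h)))) (int2 k)
              simp only [ContinuousLinearMap.flip_apply, ContinuousLinearMap.mul_apply'] at h6
              exact h6
          _ = ψfx (k, s) * α (s * (k : G)) (g (k⁻¹ * h)) := by rw [hψfx]
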